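/- For every real x ≠ 0 one has Σ_{n∈ℤ} (−1)^n/(x² + n²) = π/(x·sinh(πx)), where the series converges absolutely. -/

import Mathlib

/-!
The `2π`-periodic extension of `t ↦ cosh (x t)` from `[-π, π]` is continuous, and its Fourier
coefficients `(-1)ⁿ x sinh (π x) / (π (x² + n²))` are absolutely summable, so its Fourier series
converges to it everywhere. Evaluating at `t = 0`, where `cosh 0 = 1` and every character is `1`,
gives the identity.
-/

open Real

theorem integral_exp_neg_int_mul_I_mul_cosh (z : ℂ) (n : ℤ) (hz : z ^ 2 + n ^ 2 ≠ 0) :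
    ∫ t in (-π)..π, Complex.exp (-(n * Complex.I * t)) * Complex.cosh (z * t) =
      (-1) ^ n * 2 * z * Complex.sinh (π * z) / (z ^ 2 + n ^ 2) := by
  have hprimitive (w : ℂ) : HasDerivAt
      (fun w => Complex.exp (-(n * Complex.I * w)) *
        (z * Complex.sinh (z * w) + n * Complex.I * Complex.cosh (z * w)) / (z ^ 2 + n ^ 2))
      (Complex.exp (-(n * Complex.I * w)) * Complex.cosh (z * w)) w := by
    have hexp := ((hasDerivAt_id' w).const_mul (n * Complex.I)).neg.cexp
    have hsinh := ((hasDerivAt_id' w).const_mul z).csinh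
    have hcosh := ((hasDerivAt_id' w).const_mul z).ccosh
    refine ((hexp.mul ((hsinh.const_mul z).add (hcosh.const_mul (n * Complex.I)))).div_const
      (z ^ 2 + n ^ 2)).congr_deriv ?_
    simp only [Pi.neg_apply, Pi.add_apply]
    rw [div_eq_iff hz]
    linear_combination
      -(Complex.exp (-(n * Complex.I * w)) * Complex.cosh (z * w) * n ^ 2) * Complex.I_sq
  rw [intervalIntegral.integral_eq_sub_of_hasDerivAt (fun t _ => (hprimitive t).comp_ofReal)
    (Continuous.intervalIntegrable (by fun_prop) _ _)]
  have hright : Complex.exp (-(n * Complex.I * π)) = (-1) ^ n := by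
    rw [show -(n * Complex.I * π) = n * -(π * Complex.I) by ring, Complex.exp_int_mul,
      Complex.exp_neg_pi_mul_I]
  have hleft : Complex.exp (-(n * Complex.I * (-π : ℝ))) = (-1) ^ n := by
    rw [show -(n * Complex.I * (-π : ℝ)) = n * (π * Complex.I) by push_cast; ring,
      Complex.exp_int_mul, Complex.exp_pi_mul_I]
  rw [hright, hleft]
  push_cast
  rw [mul_neg, Complex.sinh_neg, Complex.cosh_neg, mul_comm z (π : ℂ)]
  ring

instance fact_two_pi_pos : Fact (0 < 2 * π) := ⟨two_pi_pos⟩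

noncomputable def periodicCosh (z : ℂ) : C(AddCircle (2 * π), ℂ) where
  toFun := AddCircle.liftIco (2 * π) (-π) fun t => Complex.cosh (z * t)
  continuous_toFun := AddCircle.liftIco_continuous
    (by rw [← Complex.cosh_neg]; push_cast; ring_nf) (by fun_prop)

theorem periodicCosh_apply_zero (z : ℂ) : periodicCosh z 0 = 1 := by
  rw [← QuotientAddGroup.mk_zero, periodicCosh, ContinuousMap.coe_mk,
    AddCircle.liftIco_coe_apply ⟨by linarith [pi_pos], by linarith [pi_pos]⟩]
  simp

theorem fourierCoeff_periodicCosh (z : ℂ) (n : ℤ) (hz : z ^ 2 + n ^ 2 ≠ 0) :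
    fourierCoeff (periodicCosh z) n =
      (-1) ^ n * z * Complex.sinh (π * z) / (π * (z ^ 2 + n ^ 2)) := by
  rw [periodicCosh, ContinuousMap.coe_mk, fourierCoeff_liftIco_eq, fourierCoeffOn_eq_integral]
  have hperiod : -π + 2 * π - -π = 2 * π := by ring
  simp only [hperiod, fourier_coe_apply, smul_eq_mul]
  have hcharacter (t : ℝ) : Complex.exp (2 * π * Complex.I * (-n : ℤ) * t / (2 * π : ℝ)) =
      Complex.exp (-(n * Complex.I * t)) := by
    congr 1
    push_cast
    field_simp
  rw [show -π + 2 * π = π by ring]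
  simp only [hcharacter]
  rw [integral_exp_neg_int_mul_I_mul_cosh z n hz, Complex.real_smul]
  push_cast
  field_simp

theorem summable_abs_neg_one_zpow_div_sq_add_sq (x : ℝ) :
    Summable fun n : ℤ => |(-1 : ℝ) ^ n / (x ^ 2 + (n : ℝ) ^ 2)| := by
  refine (summable_one_div_int_pow.mpr one_lt_two).of_norm_bounded_eventually ?_
  filter_upwards [Filter.eventually_cofinite_ne 0] with n hn
  have hn2 : (0 : ℝ) < (n : ℝ) ^ 2 := by
    have : (n : ℝ) ≠ 0 := by exact_mod_cast hn
    positivity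
  rw [norm_abs_eq_norm, norm_div, norm_zpow, norm_neg, norm_one, one_zpow,
    Real.norm_of_nonneg (by positivity)]
  exact one_div_le_one_div_of_le hn2 (le_add_of_nonneg_left (sq_nonneg x))

theorem hasSum_neg_one_zpow_div_sq_add_sq {x : ℝ} (hx : x ≠ 0) :
    HasSum (fun n : ℤ => (-1 : ℝ) ^ n / (x ^ 2 + (n : ℝ) ^ 2)) (π / (x * Real.sinh (π * x))) := by
  set C : ℝ := x * Real.sinh (π * x) / π
  have hC : C ≠ 0 :=
    div_ne_zero (mul_ne_zero hx (sinh_ne_zero.mpr (mul_ne_zero pi_ne_zero hx))) pi_ne_zero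
  have hcoeff : fourierCoeff (periodicCosh x) =
      fun n : ℤ => ((C * ((-1) ^ n / (x ^ 2 + (n : ℝ) ^ 2)) : ℝ) : ℂ) := by
    funext n
    rw [fourierCoeff_periodicCosh _ _
      (by exact_mod_cast (by positivity : x ^ 2 + (n : ℝ) ^ 2 ≠ 0))]
    simp only [C]
    push_cast
    field_simp
  have hsummable : Summable (fourierCoeff (periodicCosh x)) := by
    rw [hcoeff, Complex.summable_ofReal]
    exact (summable_abs_neg_one_zpow_div_sq_add_sq x).of_abs.mul_left C
  have hfourier := has_pointwise_sum_fourier_series_of_summable hsummable 0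
  simp only [hcoeff, fourier_eval_zero, smul_eq_mul, mul_one, periodicCosh_apply_zero]
    at hfourier
  rw [← Complex.ofReal_one, Complex.hasSum_ofReal] at hfourier
  have hsum := hfourier.mul_left C⁻¹
  simp only [inv_mul_cancel_left₀ hC, mul_one] at hsum
  rwa [inv_div] at hsum

/-- For every real `x ≠ 0`: `∑_{n∈ℤ} (-1)^n/(x² + n²) = π/(x sinh(πx))`, with the series
converging absolutely. -/
theorem statement14 (x : ℝ) (hx : x ≠ 0) :
    Summable (fun n : ℤ => |(-1 : ℝ) ^ n / (x ^ 2 + (n : ℝ) ^ 2)|) ∧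
    ∑' n : ℤ, (-1 : ℝ) ^ n / (x ^ 2 + (n : ℝ) ^ 2) =
      Real.pi / (x * Real.sinh (Real.pi * x)) :=
  ⟨summable_abs_neg_one_zpow_div_sq_add_sq x, (hasSum_neg_one_zpow_div_sq_add_sq hx).tsum_eq⟩
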